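/- Fix c₀ ≠ 0, ε ∈ {−1, 1}, and 𝔥 : [−1, 1] → ℝ. Suppose x : I → ℝ is twice differentiable at s₀ with x(s₀) = 0 and 0 < x'(s₀)² < 1, and that x satisfies at s₀ the helicoidal prescribed mean curvature equation 2(c₀²x'² + x²)^{3/2}·𝔥(xx'/√(c₀²x'² + x²)) = −ε·(x''(x³ + c₀²x) − (1 − x'²)(x² + 2c₀²x'²))/√(1 − x'²). Then ε𝔥(0) > 0 and x'(s₀) = ±1/√(1 + c₀²𝔥(0)²). -/

import Mathlib

/-! On the axis `x = 0` the term carrying `x''` drops out, so the prescribed mean curvature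
equation becomes the algebraic identity `|c₀ x'| 𝔥(0) = ε √(1 - x'²)`. Its sign gives
`ε 𝔥(0) > 0`, and squaring it gives `x'² (1 + c₀² 𝔥(0)²) = 1`. -/

open Real

theorem rpow_three_halves_sq {a : ℝ} (ha : 0 ≤ a) : (a ^ 2) ^ ((3 : ℝ) / 2) = a ^ 3 := by
  rw [← rpow_natCast a 2, ← rpow_mul ha, ← rpow_natCast a 3]
  norm_num

-- The equation at one parameter value, with `x x' x''` standing for `x(s₀), x'(s₀), x''(s₀)`.
def HelicoidalODE (c₀ ε : ℝ) (𝔥 : ℝ → ℝ) (x x' x'' : ℝ) : Prop :=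
  2 * (c₀ ^ 2 * x' ^ 2 + x ^ 2) ^ ((3 : ℝ) / 2) * 𝔥 (x * x' / √(c₀ ^ 2 * x' ^ 2 + x ^ 2))
    = -ε * ((x'' * (x ^ 3 + c₀ ^ 2 * x) - (1 - x' ^ 2) * (x ^ 2 + 2 * c₀ ^ 2 * x' ^ 2))
      / √(1 - x' ^ 2))

theorem HelicoidalODE.abs_mul_eq_at_axis {c₀ ε x' x'' : ℝ} {𝔥 : ℝ → ℝ}
    (hode : HelicoidalODE c₀ ε 𝔥 0 x' x'') (hq : c₀ * x' ≠ 0) (hx' : x' ^ 2 < 1) :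
    |c₀ * x'| * 𝔥 0 = ε * √(1 - x' ^ 2) := by
  have hp : 0 < √(1 - x' ^ 2) := sqrt_pos.mpr (by linarith)
  have hq' : 0 < |c₀ * x'| := abs_pos.mpr hq
  have habs : |c₀ * x'| ^ 2 = c₀ ^ 2 * x' ^ 2 := by rw [sq_abs, mul_pow]
  unfold HelicoidalODE at hode
  simp only [zero_mul, zero_div, ne_eq, OfNat.ofNat_ne_zero, not_false_eq_true, zero_pow,
    add_zero, mul_zero, zero_add, zero_sub, ← habs, rpow_three_halves_sq (abs_nonneg _)] at hode
  have hfactor : |c₀ * x'| ^ 2 * √(1 - x' ^ 2) * (|c₀ * x'| * 𝔥 0 - ε * √(1 - x' ^ 2)) = 0 := by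
    field_simp at hode
    linear_combination hode - ε * |c₀ * x'| ^ 2 * sq_sqrt (by linarith : 0 ≤ 1 - x' ^ 2)
      - ε * (1 - x' ^ 2) * habs
  exact sub_eq_zero.mp ((mul_eq_zero.mp hfactor).resolve_left (by positivity))

theorem eq_one_div_sqrt_or_of_sq_mul_eq_one {x D : ℝ} (h : x ^ 2 * D = 1) :
    x = 1 / √D ∨ x = -(1 / √D) := by
  have hD : 0 ≤ D := by nlinarith [sq_nonneg x, mul_self_nonneg (x * D)]
  apply sq_eq_sq_iff_eq_or_eq_neg.mp
  rw [div_pow, sq_sqrt hD, one_pow, eq_div_iff (by rintro rfl; simp at h)]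
  exact h

theorem helicoidal_meets_axis (c₀ ε : ℝ) (hc₀ : c₀ ≠ 0) (hε : ε = 1 ∨ ε = -1)
    (𝔥 : ℝ → ℝ) (x : ℝ → ℝ) (s₀ x' x'' : ℝ)
    (hx0 : x s₀ = 0) (hx'pos : 0 < x' ^ 2) (hx'lt : x' ^ 2 < 1)
    (hode :
      2 * (c₀ ^ 2 * x' ^ 2 + (x s₀) ^ 2) ^ ((3 : ℝ) / 2) *
          𝔥 (x s₀ * x' / Real.sqrt (c₀ ^ 2 * x' ^ 2 + (x s₀) ^ 2))
        = -ε * ((x'' * ((x s₀) ^ 3 + c₀ ^ 2 * x s₀)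
            - (1 - x' ^ 2) * ((x s₀) ^ 2 + 2 * c₀ ^ 2 * x' ^ 2))
              / Real.sqrt (1 - x' ^ 2))) :
    0 < ε * 𝔥 0 ∧
      (x' = 1 / Real.sqrt (1 + c₀ ^ 2 * (𝔥 0) ^ 2) ∨
       x' = -(1 / Real.sqrt (1 + c₀ ^ 2 * (𝔥 0) ^ 2))) := by
  have hode₀ : HelicoidalODE c₀ ε 𝔥 0 x' x'' := hx0 ▸ hode
  have hq : c₀ * x' ≠ 0 := mul_ne_zero hc₀ (by rintro rfl; simp at hx'pos)
  have hp : 0 ≤ 1 - x' ^ 2 := by linarith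
  have hkey := hode₀.abs_mul_eq_at_axis hq hx'lt
  have hε2 : ε ^ 2 = 1 := by rcases hε with rfl | rfl <;> norm_num
  have hsign : |c₀ * x'| * (ε * 𝔥 0) = √(1 - x' ^ 2) := by
    linear_combination ε * hkey + √(1 - x' ^ 2) * hε2
  refine ⟨pos_of_mul_pos_right (hsign ▸ sqrt_pos.mpr (by linarith)) (abs_nonneg _),
    eq_one_div_sqrt_or_of_sq_mul_eq_one ?_⟩
  have habs : |c₀ * x'| ^ 2 = c₀ ^ 2 * x' ^ 2 := by rw [sq_abs, mul_pow]
  linear_combination (|c₀ * x'| * 𝔥 0 + ε * √(1 - x' ^ 2)) * hkey - 𝔥 0 ^ 2 * habs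
    + ε ^ 2 * sq_sqrt hp + (1 - x' ^ 2) * hε2
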